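/- arXiv:2112.02580 — 6 statements merged into one kernel-verified Lean document; each statement's English description precedes it below -/
import Mathlib

section
/- For any real numbers x ≥ y > 1, (x-1)·log x + y - (y-1)·log y - x ≤ log Γ(x) - log Γ(y) ≤ (x - 1/2)·log x + y - (y - 1/2)·log y - x, where Γ is the Gamma function. -/
/-!
Write `ψ` for the derivative of `log Γ`. Convexity of `log Γ` and `log Γ(t + 1) = log t + log Γ(t)`
give `ψ(t + 1) ≥ log t`, and differentiating the recurrence gives `ψ(t + 1) = ψ(t) + 1/t`; hence
`ψ(t) ≥ log t - 1/t`, which says that `log Γ(t) - ((t - 1) log t - t)` is increasing.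

For `R(t) = log Γ(t) - ((t - 1/2) log t - t)` the recurrence reads
`R(t + 1) = R(t) + 1 - (t + 1/2) log(1 + 1/t)`, and
`(t + 1/2) log(1 + 1/t) = ∑ₖ (2t+1)^(-2k) / (2k+1)` is decreasing. So for `y ≤ x` the
differences `R(x + n) - R(y + n)` increase with `n`, while convexity of `log Γ`
bounds them by `(x - y)(x - y + 1/2)/(x + n) → 0`. Hence `R` is decreasing.
-/

open Filter Set Topology

namespace Real

lemma log_Gamma_add_one {t : ℝ} (ht : 0 < t) :
    log (Gamma (t + 1)) = log t + log (Gamma t) := by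
  rw [Gamma_add_one ht.ne', log_mul ht.ne' (Gamma_pos_of_pos ht).ne']

lemma differentiableAt_log_Gamma {t : ℝ} (ht : 0 < t) : DifferentiableAt ℝ (log ∘ Gamma) t :=
  (differentiableAt_Gamma fun m ↦ by linarith [m.cast_nonneg (α := ℝ)]).log
    (Gamma_pos_of_pos ht).ne'

lemma deriv_log_Gamma_add_one {t : ℝ} (ht : 0 < t) :
    deriv (log ∘ Gamma) (t + 1) = deriv (log ∘ Gamma) t + t⁻¹ := by
  rw [← deriv_comp_add_const, ← deriv_log,
    ← deriv_add (differentiableAt_log_Gamma ht) (differentiableAt_log ht.ne')]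
  refine EventuallyEq.deriv_eq ?_
  filter_upwards [eventually_gt_nhds ht] with s hs
  simp only [Function.comp_apply, Pi.add_apply, log_Gamma_add_one hs, add_comm]

lemma log_sub_inv_le_deriv_log_Gamma {t : ℝ} (ht : 0 < t) :
    log t - t⁻¹ ≤ deriv (log ∘ Gamma) t := by
  have h := convexOn_log_Gamma.slope_le_deriv ht (mem_Ioi.2 (by linarith : (0 : ℝ) < t + 1))
    (lt_add_one t) (differentiableAt_log_Gamma (by linarith))
  rw [slope_def_field, add_sub_cancel_left, div_one, Function.comp_apply, Function.comp_apply,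
    log_Gamma_add_one ht, add_sub_cancel_right, deriv_log_Gamma_add_one ht] at h
  linarith

lemma monotoneOn_log_Gamma_sub_mul_log :
    MonotoneOn (fun t ↦ log (Gamma t) - ((t - 1) * log t - t)) (Ioi 0) := by
  have hderiv {t : ℝ} (ht : 0 < t) : HasDerivAt (fun t ↦ log (Gamma t) - ((t - 1) * log t - t))
      (deriv (log ∘ Gamma) t - (log t - t⁻¹)) t := by
    have h : HasDerivAt (fun t ↦ log (Gamma t) - ((t - 1) * log t - t))
        (deriv (log ∘ Gamma) t - ((1 * log t + (t - 1) * t⁻¹) - 1)) t :=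
      (differentiableAt_log_Gamma ht).hasDerivAt.sub
        ((((hasDerivAt_id t).sub_const 1).mul (hasDerivAt_log ht.ne')).sub (hasDerivAt_id t))
    convert h using 2
    field_simp
    ring
  refine monotoneOn_of_hasDerivWithinAt_nonneg
    (f' := fun t ↦ deriv (log ∘ Gamma) t - (log t - t⁻¹)) (convex_Ioi 0)
    (fun t ht ↦ (hderiv ht).continuousAt.continuousWithinAt) (fun t ht ↦ ?_) (fun t ht ↦ ?_) <;>
    rw [interior_Ioi] at ht
  · exact (hderiv ht).hasDerivWithinAt
  · exact sub_nonneg.2 (log_sub_inv_le_deriv_log_Gamma ht)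

lemma log_Gamma_sub_le_mul_log {a b : ℝ} (hb : 0 < b) (hba : b ≤ a) :
    log (Gamma a) - log (Gamma b) ≤ (a - b) * log a := by
  rcases hba.eq_or_lt with rfl | hba
  · simp
  have h := convexOn_log_Gamma.slope_mono_adjacent hb
    (mem_Ioi.2 (by linarith : (0 : ℝ) < a + 1)) hba (lt_add_one a)
  simp only [Function.comp_apply, log_Gamma_add_one (hb.trans hba), add_sub_cancel_left,
    add_sub_cancel_right, div_one] at h
  rwa [div_le_iff₀ (sub_pos.2 hba), mul_comm] at h

lemma antitoneOn_mul_log_one_add_inv :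
    AntitoneOn (fun t ↦ (t + 1 / 2) * log (1 + t⁻¹)) (Ioi 0) := by
  have hasSum {t : ℝ} (ht : 0 < t) :
      HasSum (fun k : ℕ ↦ 1 / (2 * k + 1) * ((1 / (2 * t + 1)) ^ 2) ^ k)
        ((t + 1 / 2) * log (1 + t⁻¹)) := by
    have hterm (k : ℕ) : (t + 1 / 2) * (2 * (1 / (2 * k + 1)) * (1 / (2 * t + 1)) ^ (2 * k + 1)) =
        1 / (2 * k + 1) * ((1 / (2 * t + 1)) ^ 2) ^ k := by
      have hu : (t + 1 / 2) * (2 * (1 / (2 * t + 1))) = 1 := by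
        field_simp
      rw [pow_succ, pow_mul]
      linear_combination (1 / (2 * k + 1) * ((1 / (2 * t + 1)) ^ 2) ^ k) * hu
    simpa only [hterm] using (hasSum_log_one_add_inv ht).mul_left (t + 1 / 2)
  intro s (hs : 0 < s) t (ht : 0 < t) hst
  refine hasSum_le (fun k ↦ ?_) (hasSum ht) (hasSum hs)
  gcongr

/-- Binet's function plus `log √(2π)`. -/
noncomputable def logGammaSubStirling (t : ℝ) : ℝ := log (Gamma t) - ((t - 1 / 2) * log t - t)

lemma logGammaSubStirling_add_one {t : ℝ} (ht : 0 < t) :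
    logGammaSubStirling (t + 1) = logGammaSubStirling t + 1 - (t + 1 / 2) * log (1 + t⁻¹) := by
  have hlog : log (1 + t⁻¹) = log (t + 1) - log t := by
    rw [← log_div (by linarith) ht.ne', add_div, div_self ht.ne', one_div]
  rw [logGammaSubStirling, logGammaSubStirling, log_Gamma_add_one ht, hlog]
  ring

lemma logGammaSubStirling_sub_le {a b : ℝ} (hb : 1 / 2 ≤ b) (hba : b ≤ a) :
    logGammaSubStirling a - logGammaSubStirling b ≤ (a - b) * (a - b + 1 / 2) / a := by
  have hb0 : 0 < b := by linarith
  have ha0 : 0 < a := by linarith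
  have hL := log_Gamma_sub_le_mul_log hb0 hba
  have hlog : 1 - b / a ≤ log a - log b := by
    rw [← log_div ha0.ne' hb0.ne']
    simpa using one_sub_inv_le_log_of_pos (div_pos ha0 hb0)
  have hlog_mul : (b - 1 / 2) * (1 - b / a) ≤ (b - 1 / 2) * (log a - log b) :=
    mul_le_mul_of_nonneg_left hlog (by linarith)
  have hrhs : (a - b) * (a - b + 1 / 2) / a = (a - b) - (b - 1 / 2) * (1 - b / a) := by
    field_simp
    ring
  rw [hrhs, logGammaSubStirling, logGammaSubStirling]
  linarith

lemma logGammaSubStirling_sub_le_add_nat {x y : ℝ} (hy : 0 < y) (hyx : y ≤ x) (n : ℕ) :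
    logGammaSubStirling x - logGammaSubStirling y ≤
      logGammaSubStirling (x + n) - logGammaSubStirling (y + n) := by
  induction n with
  | zero => simp
  | succ n ih =>
    have hyn : 0 < y + n := by positivity
    have hxn : 0 < x + n := by linarith
    have hmono := antitoneOn_mul_log_one_add_inv hyn hxn (by linarith)
    push_cast
    rw [← add_assoc, ← add_assoc, logGammaSubStirling_add_one hxn, logGammaSubStirling_add_one hyn]
    linarith

lemma antitoneOn_logGammaSubStirling : AntitoneOn logGammaSubStirling (Ioi 0) := by
  intro y hy x hx hyx
  rw [← sub_nonpos]
  have hlim : Tendsto (fun n : ℕ ↦ (x - y) * (x - y + 1 / 2) / (x + n)) atTop (𝓝 0) :=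
    tendsto_const_nhds.div_atTop (tendsto_atTop_add_const_left _ x tendsto_natCast_atTop_atTop)
  refine ge_of_tendsto hlim ?_
  filter_upwards [eventually_ge_atTop 1] with n hn
  have hn' : (1 : ℝ) ≤ n := by exact_mod_cast hn
  have hbound := logGammaSubStirling_sub_le (a := x + n) (b := y + n)
    (by linarith [mem_Ioi.1 hy]) (by linarith)
  rw [add_sub_add_right_eq_sub] at hbound
  exact (logGammaSubStirling_sub_le_add_nat hy hyx n).trans hbound

end Real

theorem keckic_vasic (x y : ℝ) (hy : 1 < y) (hxy : y ≤ x) :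
    (x - 1) * Real.log x + y - (y - 1) * Real.log y - x ≤
      Real.log (Real.Gamma x) - Real.log (Real.Gamma y) ∧
    Real.log (Real.Gamma x) - Real.log (Real.Gamma y) ≤
      (x - 1 / 2) * Real.log x + y - (y - 1 / 2) * Real.log y - x := by
  have hy₀ : y ∈ Ioi (0 : ℝ) := mem_Ioi.2 (by linarith)
  have hx₀ : x ∈ Ioi (0 : ℝ) := mem_Ioi.2 (by linarith)
  have lower := Real.monotoneOn_log_Gamma_sub_mul_log hy₀ hx₀ hxy
  have upper := Real.antitoneOn_logGammaSubStirling hy₀ hx₀ hxy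
  simp only [Real.logGammaSubStirling] at lower upper
  constructor <;> linarith
end

section
/- Let n₁, n₂ be integers with n₁ > 4 and n₂ > 4, let n = n₁ + n₂, and let a₀ > 0 be a real constant. Then log Γ(n₁/2 + a₀) + log Γ(n₂/2 + a₀) - log Γ(n/2 + a₀) ≥ 2(1 - log 2) - a₀ + (1/2 + a₀)·log(n/2 + a₀) + Σ_{l=1}^{2} [ ((n_l/2) + a₀)·log((n_l + 2a₀)/(n + 2a₀)) - (1/2)·log(n_l/2 + a₀) ]. -/
/-!
Write `log Γ(x) = (x - 1/2) log x - x + R(x)`. After this substitution the claim reads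
`R(n₁/2 + a₀) + R(n₂/2 + a₀) - R(n/2 + a₀) ≥ 2 (1 - log 2)`. At a positive integer,
`R(n) = log (√2 · stirlingSeq n)`, so Stirling's formula and the monotonicity of the Stirling
sequence give `log (2π) / 2 ≤ R(n) ≤ 1`. Log-convexity of `Γ` compares `R(x)` with `R(⌊x⌋)`,
losing at most `1/15` for `x ≥ 2` and `1/12` for `x ≥ 5`, and
`log (2π) - 2/15 - 13/12 ≥ 2 (1 - log 2)`.
-/

open Real

theorem add_half_mul_log_div_le {t x : ℝ} (ht : 2 ≤ t) (htx : t ≤ x) :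
    (t + 1 / 2) * log (x / t) ≤ x - t + 1 / 15 := by
  have ht0 : 0 < t := by linarith
  have hx0 : 0 < x := by linarith
  have hlog : log (x / t) ≤ (x - t) * (x + t) / (2 * t * x) := by
    calc log (x / t) ≤ (x / t - (x / t)⁻¹) / 2 := by
          rw [← sinh_log (by positivity)]
          exact self_le_sinh_iff.2 (log_nonneg ((one_le_div ht0).2 htx))
      _ = (x - t) * (x + t) / (2 * t * x) := by field_simp; ring
  have hpoly : (t + 1 / 2) * ((x - t) * (x + t) / (2 * t * x)) ≤ x - t + 1 / 15 := by
    rw [← mul_div_assoc, div_le_iff₀ (by positivity)]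
    have hq : 0 ≤ (2 / 15) * t - (13 / 15) * (x - t) + (x - t) ^ 2 := by
      nlinarith [sq_nonneg (x - t - 13 / 30)]
    nlinarith [mul_nonneg (sub_nonneg.2 ht) hq, sq_nonneg (x - t - 26 / 45)]
  calc (t + 1 / 2) * log (x / t) ≤ (t + 1 / 2) * ((x - t) * (x + t) / (2 * t * x)) := by gcongr
    _ ≤ x - t + 1 / 15 := hpoly

theorem sub_sub_half_mul_log_div_le {t x : ℝ} (ht : 5 ≤ t) (htx : t ≤ x) (hxt : x ≤ t + 1) :
    x - t - (x - 1 / 2) * log (x / t) ≤ 1 / 12 := by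
  have ht0 : 0 < t := by linarith
  have hx0 : 0 < x := by linarith
  have hlog : (x - t) / x ≤ log (x / t) := by
    calc (x - t) / x = 1 - (x / t)⁻¹ := by field_simp
      _ ≤ log (x / t) := one_sub_inv_le_log_of_pos (by positivity)
  have hpoly : x - t - (x - 1 / 2) * ((x - t) / x) ≤ 1 / 12 := by
    have : x - t - (x - 1 / 2) * ((x - t) / x) = (x - t) / (2 * x) := by field_simp; ring
    rw [this, div_le_iff₀ (by positivity)]
    linarith
  nlinarith

theorem log_Gamma_le_add_mul_log {a b : ℝ} (ha : 0 < a) (hab : a ≤ b) (hba : b ≤ a + 1) :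
    log (Gamma b) ≤ log (Gamma a) + (b - a) * log a := by
  have h := convexOn_log_Gamma.2 (Set.mem_Ioi.2 ha) (Set.mem_Ioi.2 (by linarith : 0 < a + 1))
    (sub_nonneg.2 hba) (sub_nonneg.2 hab) (by ring)
  have hb : (a + 1 - b) • a + (b - a) • (a + 1) = b := by simp only [smul_eq_mul]; ring
  simp only [smul_eq_mul, Function.comp_apply] at h hb
  rw [hb, Gamma_add_one ha.ne', log_mul ha.ne' (Gamma_pos_of_pos ha).ne'] at h
  linarith

noncomputable def stirlingRemainder (x : ℝ) : ℝ :=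
  log (Gamma x) - ((x - 1 / 2) * log x - x)

theorem stirlingRemainder_natCast {n : ℕ} (hn : n ≠ 0) :
    stirlingRemainder n = log (√2 * Stirling.stirlingSeq n) := by
  have hn0 : (0 : ℝ) < n := by positivity
  have hs : 0 < Stirling.stirlingSeq n :=
    (sqrt_pos.2 pi_pos).trans_le (Stirling.sqrt_pi_le_stirlingSeq hn)
  have hGamma : Gamma n * n = n.factorial := by
    rw [mul_comm, ← Gamma_add_one hn0.ne', Gamma_nat_eq_factorial]
  have hfac : (n.factorial : ℝ) = Stirling.stirlingSeq n * (√(2 * n) * (n / exp 1) ^ n) := by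
    rw [Stirling.stirlingSeq]; field_simp
  have hlog := congrArg log (hGamma.trans hfac)
  rw [log_mul (Gamma_pos_of_pos hn0).ne' hn0.ne', log_mul hs.ne' (by positivity),
    log_mul (by positivity) (by positivity), sqrt_mul zero_le_two,
    log_mul (by positivity) (by positivity), log_pow, log_div hn0.ne' (exp_ne_zero 1), log_exp,
    log_sqrt hn0.le] at hlog
  rw [stirlingRemainder, log_mul (by positivity) hs.ne']
  linarith

theorem half_log_two_pi_le_stirlingRemainder_natCast {n : ℕ} (hn : n ≠ 0) :
    log (2 * π) / 2 ≤ stirlingRemainder n := by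
  rw [stirlingRemainder_natCast hn, ← log_sqrt (by positivity), sqrt_mul zero_le_two]
  exact log_le_log (by positivity) (by gcongr; exact Stirling.sqrt_pi_le_stirlingSeq hn)

theorem stirlingRemainder_natCast_le_one {n : ℕ} (hn : n ≠ 0) : stirlingRemainder n ≤ 1 := by
  obtain ⟨m, rfl⟩ := Nat.exists_eq_add_of_le' (Nat.one_le_iff_ne_zero.2 hn)
  have h : Stirling.stirlingSeq (m + 1) ≤ Stirling.stirlingSeq 1 :=
    Stirling.stirlingSeq'_antitone (Nat.zero_le m)
  rw [stirlingRemainder_natCast hn, ← log_exp 1]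
  refine log_le_log (mul_pos (by positivity) (Stirling.stirlingSeq'_pos m)) ?_
  rw [Stirling.stirlingSeq_one] at h
  calc √2 * Stirling.stirlingSeq (m + 1) ≤ √2 * (exp 1 / √2) := by gcongr
    _ = exp 1 := by field_simp

theorem stirlingRemainder_le_add_of_le {t x : ℝ} (ht : 2 ≤ t) (htx : t ≤ x) (hxt : x ≤ t + 1) :
    stirlingRemainder t ≤ stirlingRemainder x + 1 / 15 := by
  have ht0 : 0 < t := by linarith
  have hx0 : 0 < x := by linarith
  have hconv := log_Gamma_le_add_mul_log hx0 (by linarith : x ≤ t + 1) (by linarith)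
  rw [Gamma_add_one ht0.ne', log_mul ht0.ne' (Gamma_pos_of_pos ht0).ne'] at hconv
  have hlog := add_half_mul_log_div_le ht htx
  rw [log_div hx0.ne' ht0.ne'] at hlog
  unfold stirlingRemainder
  linarith

theorem stirlingRemainder_le_add_of_ge {t x : ℝ} (ht : 5 ≤ t) (htx : t ≤ x) (hxt : x ≤ t + 1) :
    stirlingRemainder x ≤ stirlingRemainder t + 1 / 12 := by
  have ht0 : 0 < t := by linarith
  have hx0 : 0 < x := by linarith
  have hconv := log_Gamma_le_add_mul_log ht0 htx hxt
  have hlog := sub_sub_half_mul_log_div_le ht htx hxt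
  rw [log_div hx0.ne' ht0.ne'] at hlog
  unfold stirlingRemainder
  linarith

theorem half_log_two_pi_sub_le_stirlingRemainder {x : ℝ} (hx : 2 ≤ x) :
    log (2 * π) / 2 - 1 / 15 ≤ stirlingRemainder x := by
  have hn : (2 : ℝ) ≤ ⌊x⌋₊ := by exact_mod_cast Nat.le_floor (by exact_mod_cast hx)
  have h := stirlingRemainder_le_add_of_le hn (Nat.floor_le (by linarith))
    (Nat.lt_floor_add_one x).le
  have := half_log_two_pi_le_stirlingRemainder_natCast (n := ⌊x⌋₊)
    (Nat.floor_pos.2 (by linarith)).ne'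
  linarith

theorem stirlingRemainder_le_thirteen_twelfths {x : ℝ} (hx : 5 ≤ x) :
    stirlingRemainder x ≤ 13 / 12 := by
  have hn : (5 : ℝ) ≤ ⌊x⌋₊ := by exact_mod_cast Nat.le_floor (by exact_mod_cast hx)
  have h := stirlingRemainder_le_add_of_ge hn (Nat.floor_le (by linarith))
    (Nat.lt_floor_add_one x).le
  have := stirlingRemainder_natCast_le_one (n := ⌊x⌋₊) (Nat.floor_pos.2 (by linarith)).ne'
  linarith

theorem two_mul_one_sub_log_two_le : 2 * (1 - log 2) ≤ log (2 * π) - 2 / 15 - 13 / 12 := by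
  have hπ : 1 - 3 / π ≤ log (π / 3) := by
    simpa [inv_div] using one_sub_inv_le_log_of_pos (by positivity : 0 < π / 3)
  have h3π : 3 / π ≤ 3 / 3.14159 := by gcongr; exact pi_gt_d6.le.trans' (by norm_num)
  rw [log_div pi_ne_zero (by norm_num)] at hπ
  rw [log_mul two_ne_zero pi_ne_zero]
  linarith [log_two_gt_d9, log_three_gt_d9, (by norm_num : (3 : ℝ) / 3.14159 < 0.955)]

theorem logGamma_sum_lower (n₁ n₂ : ℕ) (h₁ : 4 < n₁) (h₂ : 4 < n₂) (a₀ : ℝ) (ha : 0 < a₀) :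
    Real.log (Real.Gamma ((n₁ : ℝ) / 2 + a₀)) + Real.log (Real.Gamma ((n₂ : ℝ) / 2 + a₀))
      - Real.log (Real.Gamma (((n₁ : ℝ) + (n₂ : ℝ)) / 2 + a₀)) ≥
    2 * (1 - Real.log 2) - a₀ + (1 / 2 + a₀) * Real.log (((n₁ : ℝ) + (n₂ : ℝ)) / 2 + a₀)
      + ((((n₁ : ℝ) / 2) + a₀) *
            Real.log (((n₁ : ℝ) + 2 * a₀) / ((n₁ : ℝ) + (n₂ : ℝ) + 2 * a₀))
          - (1 / 2) * Real.log ((n₁ : ℝ) / 2 + a₀))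
      + ((((n₂ : ℝ) / 2) + a₀) *
            Real.log (((n₂ : ℝ) + 2 * a₀) / ((n₁ : ℝ) + (n₂ : ℝ) + 2 * a₀))
          - (1 / 2) * Real.log ((n₂ : ℝ) / 2 + a₀)) := by
  have hn₁ : (5 : ℝ) ≤ n₁ := by exact_mod_cast h₁
  have hn₂ : (5 : ℝ) ≤ n₂ := by exact_mod_cast h₂
  set A := (n₁ : ℝ) / 2 + a₀ with hAdef
  set B := (n₂ : ℝ) / 2 + a₀ with hBdef
  set C := ((n₁ : ℝ) + n₂) / 2 + a₀ with hCdef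
  have hA := half_log_two_pi_sub_le_stirlingRemainder (x := A) (by linarith)
  have hB := half_log_two_pi_sub_le_stirlingRemainder (x := B) (by linarith)
  have hC := stirlingRemainder_le_thirteen_twelfths (x := C) (by linarith)
  have hAC : ((n₁ : ℝ) + 2 * a₀) / (n₁ + n₂ + 2 * a₀) = A / C := by
    rw [div_eq_div_iff (by linarith) (by linarith)]; ring
  have hBC : ((n₂ : ℝ) + 2 * a₀) / (n₁ + n₂ + 2 * a₀) = B / C := by
    rw [div_eq_div_iff (by linarith) (by linarith)]; ring
  have hClog : C * log C = (A + B - a₀) * log C := by congr 1; linarith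
  rw [hAC, hBC, log_div (by linarith) (by linarith), log_div (by linarith) (by linarith)]
  unfold stirlingRemainder at hA hB hC
  linarith [two_mul_one_sub_log_two_le]
end

section
/- Let n₁, n₂ be positive integers, n = n₁ + n₂, and a₀ > 0 a real constant. Then (n₁/2)·log(n(n₁ + 2a₀)/(n₁(n + 2a₀))) + (n₂/2)·log(n(n₂ + 2a₀)/(n₂(n + 2a₀))) ≤ a₀. -/
/-! Bounding each logarithm by `log y ≤ y - 1` turns the term of sample size `nᵢ` into
`a₀ (n - nᵢ) / (n + 2 a₀)`, so the sum is at most `a₀ n / (n + 2 a₀) ≤ a₀`. -/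

open Real

theorem half_mul_log_le (x m a : ℝ) (hx : 0 < x) (hm : 0 < m) (ha : 0 ≤ a) :
    x / 2 * log (m * (x + 2 * a) / (x * (m + 2 * a))) ≤ a * (m - x) / (m + 2 * a) := by
  calc x / 2 * log (m * (x + 2 * a) / (x * (m + 2 * a)))
      ≤ x / 2 * (m * (x + 2 * a) / (x * (m + 2 * a)) - 1) :=
        mul_le_mul_of_nonneg_left (log_le_sub_one_of_pos (by positivity)) (by positivity)
    _ = a * (m - x) / (m + 2 * a) := by
        field_simp
        ring

theorem correction_term_le (n₁ n₂ : ℕ) (h₁ : 0 < n₁) (h₂ : 0 < n₂) (a₀ : ℝ) (ha : 0 < a₀) :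
    ((n₁ : ℝ) / 2) *
        Real.log (((n₁ : ℝ) + (n₂ : ℝ)) * ((n₁ : ℝ) + 2 * a₀) /
          ((n₁ : ℝ) * ((n₁ : ℝ) + (n₂ : ℝ) + 2 * a₀)))
      + ((n₂ : ℝ) / 2) *
        Real.log (((n₁ : ℝ) + (n₂ : ℝ)) * ((n₂ : ℝ) + 2 * a₀) /
          ((n₂ : ℝ) * ((n₁ : ℝ) + (n₂ : ℝ) + 2 * a₀))) ≤ a₀ := by
  have hx₁ : (0 : ℝ) < n₁ := Nat.cast_pos.mpr h₁
  have hx₂ : (0 : ℝ) < n₂ := Nat.cast_pos.mpr h₂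
  have hn : (0 : ℝ) < n₁ + n₂ + 2 * a₀ := by positivity
  have hsum : a₀ * ((n₁ + n₂) - n₁) / (n₁ + n₂ + 2 * a₀)
      + a₀ * ((n₁ + n₂) - n₂) / (n₁ + n₂ + 2 * a₀) ≤ a₀ := by
    rw [← add_div, div_le_iff₀ hn]
    nlinarith
  have hterm₁ := half_mul_log_le n₁ (n₁ + n₂) a₀ hx₁ (by positivity) ha.le
  have hterm₂ := half_mul_log_le n₂ (n₁ + n₂) a₀ hx₂ (by positivity) ha.le
  linarith
end

section
/- Let x₁,…,x_{n₁}, y₁,…,y_{n₂}, u₁,…,u_{n₁}, v₁,…,v_{n₂} be real numbers with ‖u‖ > 0 and ‖v‖ > 0, where ‖u‖² = Σuⱼ², ‖v‖² = Σvⱼ². Let ⟨x,u⟩ = Σxⱼuⱼ, ⟨y,v⟩ = Σyⱼvⱼ, and define the residual sums of squares R_X = ‖x‖² - ⟨x,u⟩²/‖u‖², R_Y = ‖y‖² - ⟨y,v⟩²/‖v‖², and R_Z = ‖x‖² + ‖y‖² - (⟨x,u⟩ + ⟨y,v⟩)²/(‖u‖² + ‖v‖²). Then R_Z - R_X - R_Y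 = (1/(‖u‖² + ‖v‖²))·( ‖v‖·⟨x,u⟩/‖u‖ - ‖u‖·⟨y,v⟩/‖v‖ )². -/
theorem residual_sum_decomposition (m k : ℕ)
    (x u : Fin m → ℝ) (y v : Fin k → ℝ)
    (Nu Nv ipxu ipyv RX RY RZ : ℝ)
    (hNu : Nu = ∑ j, (u j) ^ 2) (hNv : Nv = ∑ j, (v j) ^ 2)
    (hNu0 : 0 < Nu) (hNv0 : 0 < Nv)
    (hipxu : ipxu = ∑ j, x j * u j) (hipyv : ipyv = ∑ j, y j * v j)
    (hRX : RX = (∑ j, (x j) ^ 2) - ipxu ^ 2 / Nu)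
    (hRY : RY = (∑ j, (y j) ^ 2) - ipyv ^ 2 / Nv)
    (hRZ : RZ = (∑ j, (x j) ^ 2) + (∑ j, (y j) ^ 2) - (ipxu + ipyv) ^ 2 / (Nu + Nv)) :
    RZ - RX - RY =
      (1 / (Nu + Nv)) *
        (Real.sqrt Nv * ipxu / Real.sqrt Nu - Real.sqrt Nu * ipyv / Real.sqrt Nv) ^ 2 := by
  have hu : Real.sqrt Nu ^ 2 = Nu := Real.sq_sqrt hNu0.le
  have hv : Real.sqrt Nv ^ 2 = Nv := Real.sq_sqrt hNv0.le
  have hu0 : Real.sqrt Nu ≠ 0 := by positivity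
  have hv0 : Real.sqrt Nv ≠ 0 := by positivity
  subst hRX hRY hRZ
  have huv : Nu + Nv ≠ 0 := by positivity
  set a := Real.sqrt Nu with ha
  set b := Real.sqrt Nv with hb
  have huv : Nu + Nv ≠ 0 := by positivity
  rw [← hu, ← hv] at *
  field_simp
  ring
end

section
/- Let X be a random variable with chi-squared distribution with k degrees of freedom (k a positive integer). Then for any x > 0, P( X ≤ k + 2√(k x) + 2x ) ≥ 1 - exp(-x) and P( X ≥ k - 2√(k x) ) ≥ 1 - exp(-x). -/
/-!
Chernoff bound by a change of rate. With `t = (a / r) u`, on a set where `(1 - u) y ≤ (1 - u) t`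
the Gamma(a, r) density is at most `u ^ a * exp (a (1 - u))` times the Gamma(a, r / u) density, so
such a set has Gamma(a, r)-mass at most `exp (-a (u - 1 - log u))`; the sets `[t, ∞)` for `u ≥ 1`
and `(-∞, t]` for `u ≤ 1` qualify. For χ²(k), i.e. `a = k / 2`, `r = 1 / 2`, write `x = k v²`: the
two thresholds are `k u` with `u = 1 + 2v + 2v²` and `u = 1 - 2v`, and
`log (1 + 2v + 2v²) ≤ 2v`, `log (1 - 2v) ≤ -2v - 2v²` give `u - 1 - log u ≥ 2v²` in both cases,
so each tail has mass at most `exp (-k v²) = exp (-x)`.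
-/

open MeasureTheory ProbabilityTheory Real Set

lemma gammaPDFReal_eq_mul_gammaPDFReal (a : ℝ) {r b : ℝ} (hr : 0 < r) (hb : 0 < b) (y : ℝ) :
    gammaPDFReal a r y = (r / b) ^ a * exp ((b - r) * y) * gammaPDFReal a b y := by
  by_cases hy : 0 ≤ y
  · have hrb : (r / b) ^ a * b ^ a = r ^ a := by
      rw [div_rpow hr.le hb.le, div_mul_cancel₀ _ (rpow_pos_of_pos hb a).ne']
    have hexp : exp ((b - r) * y) * exp (-(b * y)) = exp (-(r * y)) := by
      rw [← exp_add]; ring_nf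
    simp only [gammaPDFReal, if_pos hy, ← hrb, ← hexp]
    ring
  · simp [gammaPDFReal, hy]

lemma gammaMeasure_le_of_forall_mul_le {a r u : ℝ} (ha : 0 < a) (hr : 0 < r) (hu : 0 < u)
    {s : Set ℝ} (hs : MeasurableSet s) (h : ∀ y ∈ s, (1 - u) * y ≤ (1 - u) * (a / r * u)) :
    gammaMeasure a r s ≤ ENNReal.ofReal (exp (-(a * (u - 1 - log u)))) := by
  have hb : 0 < r / u := div_pos hr hu
  have := isProbabilityMeasure_gammaMeasure ha hb
  set C := exp (-(a * (u - 1 - log u)))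
  have hC : (r / (r / u)) ^ a * exp ((r / u - r) * (a / r * u)) = C := by
    rw [div_div_cancel₀ hr.ne', rpow_def_of_pos hu, ← exp_add]
    congr 1
    field_simp
    ring
  have hpdf : ∀ y ∈ s, gammaPDF a r y ≤ ENNReal.ofReal C * gammaPDF a (r / u) y := by
    intro y hy
    have hexp : (r / u - r) * y ≤ (r / u - r) * (a / r * u) := by
      have := mul_le_mul_of_nonneg_left (h y hy) hb.le
      rw [show r / u - r = r / u * (1 - u) by field_simp]
      linarith
    rw [gammaPDF, gammaPDF, gammaPDFReal_eq_mul_gammaPDFReal a hr hb, ← hC,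
      ← ENNReal.ofReal_mul (by positivity)]
    refine ENNReal.ofReal_le_ofReal (mul_le_mul_of_nonneg_right ?_ (gammaPDFReal_nonneg ha hb y))
    exact mul_le_mul_of_nonneg_left (exp_le_exp.mpr hexp) (by positivity)
  calc gammaMeasure a r s = ∫⁻ y in s, gammaPDF a r y := withDensity_apply _ hs
    _ ≤ ∫⁻ y in s, ENNReal.ofReal C * gammaPDF a (r / u) y :=
        setLIntegral_mono ((measurable_gammaPDFReal a _).ennreal_ofReal.const_mul _) hpdf
    _ = ENNReal.ofReal C * gammaMeasure a (r / u) s := by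
        rw [lintegral_const_mul' _ _ ENNReal.ofReal_ne_top, gammaMeasure, withDensity_apply _ hs]
    _ ≤ ENNReal.ofReal C := mul_le_of_le_one_right' prob_le_one

lemma gammaMeasure_Ici_le {a r u : ℝ} (ha : 0 < a) (hr : 0 < r) (hu : 1 ≤ u) :
    gammaMeasure a r (Ici (a / r * u)) ≤ ENNReal.ofReal (exp (-(a * (u - 1 - log u)))) :=
  gammaMeasure_le_of_forall_mul_le ha hr (by linarith) measurableSet_Ici
    fun _ hy => mul_le_mul_of_nonpos_left hy (by linarith)

lemma gammaMeasure_Iic_le {a r u : ℝ} (ha : 0 < a) (hr : 0 < r) (hu₀ : 0 < u) (hu : u ≤ 1) :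
    gammaMeasure a r (Iic (a / r * u)) ≤ ENNReal.ofReal (exp (-(a * (u - 1 - log u)))) :=
  gammaMeasure_le_of_forall_mul_le ha hr hu₀ measurableSet_Iic
    fun _ hy => mul_le_mul_of_nonneg_left hy (by linarith)

lemma log_one_sub_le {w : ℝ} (hw₀ : 0 ≤ w) (hw₁ : w < 1) : log (1 - w) ≤ -w - w ^ 2 / 2 := by
  have hsum := hasSum_pow_div_log_of_abs_lt_one (abs_lt.mpr ⟨by linarith, hw₁⟩)
  have := sum_le_hasSum (Finset.range 2) (fun n _ => by positivity) hsum
  norm_num [Finset.sum_range_succ] at this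
  linarith

lemma gammaMeasure_Ioi_le_exp {a r v : ℝ} (ha : 0 < a) (hr : 0 < r) (hv : 0 ≤ v) :
    gammaMeasure a r (Ioi (a / r * (1 + 2 * v + 2 * v ^ 2))) ≤
      ENNReal.ofReal (exp (-(2 * a * v ^ 2))) := by
  have hlog : log (1 + 2 * v + 2 * v ^ 2) ≤ 2 * v := by
    rw [log_le_iff_le_exp (by positivity)]
    linarith [quadratic_le_exp_of_nonneg (by positivity : 0 ≤ 2 * v)]
  refine (measure_mono Ioi_subset_Ici_self).trans <|
    (gammaMeasure_Ici_le ha hr (by nlinarith)).trans <| ENNReal.ofReal_le_ofReal ?_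
  rw [exp_le_exp]
  nlinarith

lemma gammaMeasure_Iio_le_exp {a r v : ℝ} (ha : 0 < a) (hr : 0 < r) (hv : 0 ≤ v) :
    gammaMeasure a r (Iio (a / r * (1 - 2 * v))) ≤ ENNReal.ofReal (exp (-(2 * a * v ^ 2))) := by
  rcases le_or_gt (1 - 2 * v) 0 with hv₁ | hv₁
  · rw [gammaMeasure, withDensity_apply _ measurableSet_Iio,
      lintegral_gammaPDF_of_nonpos (mul_nonpos_of_nonneg_of_nonpos (div_pos ha hr).le hv₁)]
    exact zero_le
  have hlog : log (1 - 2 * v) ≤ -(2 * v) - 2 * v ^ 2 := by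
    linarith [log_one_sub_le (by positivity : 0 ≤ 2 * v) (by linarith)]
  refine (measure_mono Iio_subset_Iic_self).trans <|
    (gammaMeasure_Iic_le ha hr hv₁ (by linarith)).trans <| ENNReal.ofReal_le_ofReal ?_
  rw [exp_le_exp]
  nlinarith

lemma one_sub_le_measureReal_of_measure_compl_le {α : Type*} [MeasurableSpace α]
    {μ : Measure α} [IsProbabilityMeasure μ] {s : Set α} (hs : MeasurableSet s) {ε : ℝ}
    (hε : 0 ≤ ε) (h : μ sᶜ ≤ ENNReal.ofReal ε) : 1 - ε ≤ μ.real s := by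
  have := ENNReal.toReal_le_of_le_ofReal hε h
  rw [← measureReal_def, probReal_compl_eq_one_sub hs] at this
  linarith

theorem chi_squared_concentration_general {Ω : Type*} [MeasureSpace Ω]
    (k : ℕ) (hk : 0 < k) (X : Ω → ℝ)
    (hX : Measure.map X volume = gammaMeasure ((k : ℝ) / 2) (1 / 2))
    (x : ℝ) (hx : 0 < x) :
    (volume {ω | X ω ≤ (k : ℝ) + 2 * Real.sqrt ((k : ℝ) * x) + 2 * x}).toReal ≥
        1 - Real.exp (-x) ∧
    (volume {ω | X ω ≥ (k : ℝ) - 2 * Real.sqrt ((k : ℝ) * x)}).toReal ≥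
        1 - Real.exp (-x) := by
  have hk₀ : (0 : ℝ) < k := Nat.cast_pos.mpr hk
  have ha : (0 : ℝ) < k / 2 := by positivity
  have hr : (0 : ℝ) < 1 / 2 := by norm_num
  have := isProbabilityMeasure_gammaMeasure ha hr
  have hlaw : ∀ s, MeasurableSet s → volume (X ⁻¹' s) = gammaMeasure ((k : ℝ) / 2) (1 / 2) s := by
    intro s hs
    have hXm : AEMeasurable X volume := .of_map_ne_zero (hX ▸ IsProbabilityMeasure.ne_zero _)
    rw [← Measure.map_apply_of_aemeasurable hXm hs, hX]
  obtain ⟨v, hv, rfl⟩ : ∃ v, 0 ≤ v ∧ x = k * v ^ 2 :=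
    ⟨sqrt (x / k), sqrt_nonneg _, by rw [sq_sqrt (by positivity)]; field_simp⟩
  have hsqrt : sqrt (k * (k * v ^ 2)) = k * v := by
    rw [show (k : ℝ) * (k * v ^ 2) = (k * v) ^ 2 by ring, sqrt_sq (by positivity)]
  have hexp : exp (-(k * v ^ 2)) = exp (-(2 * (k / 2) * v ^ 2)) := by ring_nf
  constructor
  · have ht : k + 2 * sqrt (k * (k * v ^ 2)) + 2 * (k * v ^ 2) =
        k / 2 / (1 / 2) * (1 + 2 * v + 2 * v ^ 2) := by rw [hsqrt]; ring
    rw [ht]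
    change (volume (X ⁻¹' Iic _)).toReal ≥ _
    rw [hlaw _ measurableSet_Iic, hexp]
    refine one_sub_le_measureReal_of_measure_compl_le measurableSet_Iic (exp_nonneg _) ?_
    rw [compl_Iic]
    exact gammaMeasure_Ioi_le_exp ha hr hv
  · have ht : k - 2 * sqrt (k * (k * v ^ 2)) = k / 2 / (1 / 2) * (1 - 2 * v) := by
      rw [hsqrt]; ring
    rw [ht]
    change (volume (X ⁻¹' Ici _)).toReal ≥ _
    rw [hlaw _ measurableSet_Ici, hexp]
    refine one_sub_le_measureReal_of_measure_compl_le measurableSet_Ici (exp_nonneg _) ?_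
    rw [compl_Ici]
    exact gammaMeasure_Iio_le_exp ha hr hv

theorem chi_squared_concentration {Ω : Type*} [MeasureSpace Ω]
    (hP : IsProbabilityMeasure (volume : Measure Ω))
    (k : ℕ) (hk : 0 < k) (X : Ω → ℝ)
    (hX : Measure.map X volume = gammaMeasure ((k : ℝ) / 2) (1 / 2))
    (x : ℝ) (hx : 0 < x) :
    (volume {ω | X ω ≤ (k : ℝ) + 2 * Real.sqrt ((k : ℝ) * x) + 2 * x}).toReal ≥
        1 - Real.exp (-x) ∧
    (volume {ω | X ω ≥ (k : ℝ) - 2 * Real.sqrt ((k : ℝ) * x)}).toReal ≥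
        1 - Real.exp (-x) :=
  chi_squared_concentration_general k hk X hX x hx
end

section
/- Let X have the non-central chi-squared distribution with k degrees of freedom and non-centrality parameter λ ≥ 0. Then for any x > 0, P( X ≤ k + λ + 2√((k + 2λ)x) + 2x ) ≥ 1 - exp(-x) and P( X ≥ k + λ - 2√((k + 2λ)x) ) ≥ 1 - exp(-x). -/
/-!
Chernoff's method. For `Z ~ N(0,1)` and `t < 1/2`, completing the square gives
`E exp (t (Z + a)²) = exp (a² t / (1 - 2t)) / √(1 - 2t)`, so by independence the moment generating
function of `X = ∑ (Zᵢ + μᵢ)²` is `exp (λ t / (1 - 2t)) · (1 - 2t) ^ (-k/2)`. Using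
`-log (1 - u) ≤ u + u² / (2 (1 - u))` for `0 ≤ u < 1` (from `log z ≤ sinh (log z)`) and
`-log (1 - u) ≤ u + u² / 2` for `u ≤ 0`, the centred log-mgf is at most `(k + 2λ) t² / (1 - 2t)`
for `0 ≤ t < 1/2` and at most `(k + 2λ) t²` for `t ≤ 0`: `X` is sub-gamma on the right with
variance factor `2 (k + 2λ)` and scale `2`, and sub-Gaussian on the left. Optimising the Chernoff
bound over `t` gives both tails, as in Laurent and Massart.
-/

open MeasureTheory ProbabilityTheory Real

lemma neg_log_one_sub_le_of_nonneg {u : ℝ} (h0 : 0 ≤ u) (h1 : u < 1) :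
    -log (1 - u) ≤ u + u ^ 2 / (2 * (1 - u)) := by
  have hpos : 0 < 1 - u := by linarith
  have hlog : 0 ≤ log (1 - u)⁻¹ := log_nonneg (one_le_inv₀ hpos |>.2 (by linarith))
  calc -log (1 - u) = log (1 - u)⁻¹ := (log_inv _).symm
    _ ≤ sinh (log (1 - u)⁻¹) := self_le_sinh_iff.2 hlog
    _ = u + u ^ 2 / (2 * (1 - u)) := by
      rw [sinh_log (inv_pos.2 hpos), inv_inv]
      field_simp
      ring

lemma neg_log_one_sub_le_of_nonpos {u : ℝ} (h : u ≤ 0) : -log (1 - u) ≤ u + u ^ 2 / 2 := by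
  have hlog := le_log_one_add_of_nonneg (neg_nonneg.2 h)
  rw [← sub_eq_add_neg] at hlog
  have : -u - u ^ 2 / 2 ≤ 2 * -u / (-u + 2) := by
    rw [le_div_iff₀ (by linarith)]
    nlinarith [mul_nonpos_iff.2 (Or.inr ⟨h, sq_nonneg u⟩)]
  linarith

lemma integral_exp_neg_mul_sq_add_mul {b : ℝ} (hb : b ≠ 0) (c : ℝ) :
    ∫ z, exp (-b * z ^ 2 + c * z) = √(π / b) * exp (c ^ 2 / (4 * b)) := by
  have hsq (z : ℝ) : exp (-b * z ^ 2 + c * z)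
      = exp (c ^ 2 / (4 * b)) * exp (-b * (z - c / (2 * b)) ^ 2) := by
    rw [← exp_add]; congr 1; field_simp; ring
  simp_rw [hsq]
  rw [integral_const_mul, integral_sub_right_eq_self (fun z => exp (-b * z ^ 2)), integral_gaussian,
    mul_comm]

lemma mgf_sq_gaussianReal (a : ℝ) {t : ℝ} (ht : t < 1 / 2) :
    mgf (fun x => x ^ 2) (gaussianReal a 1) t = exp (a ^ 2 * t / (1 - 2 * t)) / √(1 - 2 * t) := by
  have hb : 1 / 2 - t ≠ 0 := by linarith
  have hpos : 0 < 1 - 2 * t := by linarith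
  have hdens (x : ℝ) : gaussianPDFReal a 1 x • exp (t * x ^ 2)
      = ((√(2 * π))⁻¹ * exp (-a ^ 2 / 2)) * exp (-(1 / 2 - t) * x ^ 2 + a * x) := by
    simp only [gaussianPDFReal, smul_eq_mul, mul_assoc, ← exp_add, NNReal.coe_one, mul_one]
    congr 2
    ring
  rw [mgf, integral_gaussianReal_eq_integral_smul one_ne_zero]
  simp_rw [hdens]
  rw [integral_const_mul, integral_exp_neg_mul_sq_add_mul hb]
  have hroot : (√(2 * π))⁻¹ * √(π / (1 / 2 - t)) = (√(1 - 2 * t))⁻¹ := by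
    rw [← sqrt_inv, ← sqrt_inv, ← sqrt_mul (by positivity)]
    congr 1
    field_simp
  calc (√(2 * π))⁻¹ * exp (-a ^ 2 / 2) * (√(π / (1 / 2 - t)) * exp (a ^ 2 / (4 * (1 / 2 - t))))
      = ((√(2 * π))⁻¹ * √(π / (1 / 2 - t))) * exp (-a ^ 2 / 2 + a ^ 2 / (4 * (1 / 2 - t))) := by
        rw [exp_add]; ring
    _ = exp (a ^ 2 * t / (1 - 2 * t)) / √(1 - 2 * t) := by
        rw [hroot, div_eq_inv_mul (exp _)]
        congr 2
        field_simp
        ring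

/-- Only meaningful for `t < 1/2`: beyond that the moment generating function is infinite. -/
noncomputable def noncentralChiSquaredMGF (k : ℕ) (lam t : ℝ) : ℝ :=
  exp (lam * t / (1 - 2 * t)) / √(1 - 2 * t) ^ k

lemma mgf_sum_sq_add_eq_noncentralChiSquaredMGF {Ω ι : Type*} [MeasurableSpace Ω] [Fintype ι]
    {P : Measure Ω} {Z : ι → Ω → ℝ} (hindep : iIndepFun Z P)
    (hgauss : ∀ i, P.map (Z i) = gaussianReal 0 1)
    (a : ι → ℝ) {t : ℝ} (ht : t < 1 / 2) :
    mgf (fun ω => ∑ i, (Z i ω + a i) ^ 2) P t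
      = noncentralChiSquaredMGF (Fintype.card ι) (∑ i, a i ^ 2) t := by
  have hlaw (i : ι) : HasLaw (fun ω => Z i ω + a i) (gaussianReal (a i) 1) P := by
    simpa using gaussianReal_add_const
      ⟨aemeasurable_of_map_neZero (by rw [hgauss i]; infer_instance), hgauss i⟩ (a i)
  have hindep_sq : iIndepFun (fun i ω => (Z i ω + a i) ^ 2) P :=
    hindep.comp (fun i z => (z + a i) ^ 2) (by fun_prop)
  have hmgf (i : ι) : mgf (fun ω => (Z i ω + a i) ^ 2) P t
      = exp (a i ^ 2 * t / (1 - 2 * t)) / √(1 - 2 * t) := by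
    change mgf ((fun x => x ^ 2) ∘ fun ω => Z i ω + a i) P t = _
    rw [← mgf_map (hlaw i).aemeasurable (by fun_prop), (hlaw i).map_eq, mgf_sq_gaussianReal _ ht]
  have hsum : (fun ω => ∑ i, (Z i ω + a i) ^ 2) = ∑ i, fun ω => (Z i ω + a i) ^ 2 := by
    ext ω; simp
  rw [hsum, hindep_sq.mgf_sum₀ (fun i => (hlaw i).aemeasurable.pow_const 2) Finset.univ]
  simp_rw [hmgf]
  rw [noncentralChiSquaredMGF, Finset.prod_div_distrib, ← exp_sum, Finset.prod_const,
    Finset.card_univ, Finset.sum_mul, Finset.sum_div]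

lemma noncentralChiSquaredMGF_eq_exp (k : ℕ) (lam : ℝ) {t : ℝ} (ht : t < 1 / 2) :
    noncentralChiSquaredMGF k lam t = exp (lam * t / (1 - 2 * t) + k / 2 * -log (1 - 2 * t)) := by
  have hpos : 0 < 1 - 2 * t := by linarith
  rw [noncentralChiSquaredMGF, ← exp_log (sqrt_pos.2 hpos), ← exp_nat_mul, ← exp_sub,
    log_sqrt hpos.le]
  ring_nf

lemma noncentralChiSquaredMGF_le_of_nonneg (k : ℕ) {lam t : ℝ} (ht0 : 0 ≤ t) (ht : t < 1 / 2) :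
    noncentralChiSquaredMGF k lam t
      ≤ exp (t * (k + lam) + 2 * (k + 2 * lam) * t ^ 2 / (2 * (1 - 2 * t))) := by
  -- `field_simp` looks for its side conditions in `ring_nf` normal form.
  have hne : 1 - t * 2 ≠ 0 := by linarith
  rw [noncentralChiSquaredMGF_eq_exp k lam ht, exp_le_exp]
  calc lam * t / (1 - 2 * t) + k / 2 * -log (1 - 2 * t)
      ≤ lam * t / (1 - 2 * t) + k / 2 * (2 * t + (2 * t) ^ 2 / (2 * (1 - 2 * t))) := by
        gcongr
        exact neg_log_one_sub_le_of_nonneg (by positivity) (by linarith)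
    _ = t * (k + lam) + 2 * (k + 2 * lam) * t ^ 2 / (2 * (1 - 2 * t)) := by
        field_simp
        ring

lemma noncentralChiSquaredMGF_le_of_nonpos (k : ℕ) {lam t : ℝ} (hlam : 0 ≤ lam) (ht : t ≤ 0) :
    noncentralChiSquaredMGF k lam t ≤ exp (t * (k + lam) + 2 * (k + 2 * lam) * t ^ 2 / 2) := by
  have hone : 1 ≤ 1 - 2 * t := by linarith
  have hne : 1 - t * 2 ≠ 0 := by linarith
  rw [noncentralChiSquaredMGF_eq_exp k lam (by linarith), exp_le_exp]
  have hlam_term : lam * t / (1 - 2 * t) ≤ lam * t + 2 * lam * t ^ 2 := by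
    have : lam * t / (1 - 2 * t) = lam * t + 2 * lam * t ^ 2 / (1 - 2 * t) := by
      field_simp
      ring
    rw [this]
    gcongr
    exact div_le_self (by positivity) hone
  calc lam * t / (1 - 2 * t) + k / 2 * -log (1 - 2 * t)
      ≤ (lam * t + 2 * lam * t ^ 2) + k / 2 * (2 * t + (2 * t) ^ 2 / 2) := by
        gcongr
        exact neg_log_one_sub_le_of_nonpos (by linarith)
    _ = t * (k + lam) + 2 * (k + 2 * lam) * t ^ 2 / 2 := by ring

section Tails

variable {Ω : Type*} [MeasurableSpace Ω] {μ : Measure Ω} {X : Ω → ℝ}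

lemma measureReal_ge_le_exp_neg_of_mgf_le [IsFiniteMeasure μ] {m v c x : ℝ} (hv : 0 < v)
    (hc : 0 ≤ c) (hx : 0 ≤ x)
    (hX : ∀ t, 0 ≤ t → c * t < 1 → Integrable (fun ω => exp (t * X ω)) μ ∧
      mgf X μ t ≤ exp (t * m + v * t ^ 2 / (2 * (1 - c * t)))) :
    μ.real {ω | m + √(2 * v * x) + c * x ≤ X ω} ≤ exp (-x) := by
  set a := √(2 * v)
  set s := √x
  have ha : 0 < a := sqrt_pos.2 (by positivity)
  have hs : 0 ≤ s := sqrt_nonneg x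
  have hvx : √(2 * v * x) = a * s := sqrt_mul (by positivity) x
  have hx2 : x = s ^ 2 := (sq_sqrt hx).symm
  have hv2 : v = a ^ 2 / 2 := by rw [sq_sqrt (by positivity)]; ring
  -- minimises the Chernoff exponent, which then equals `-x` exactly
  set t := 2 * s / (a + 2 * c * s) with ht
  have ht0 : 0 ≤ t := by positivity
  have hct : 1 - c * t = a / (a + 2 * c * s) := by rw [ht]; field_simp; ring
  have hct1 : c * t < 1 := by
    have : 0 < a / (a + 2 * c * s) := by positivity
    linarith
  obtain ⟨hint, hmgf⟩ := hX t ht0 hct1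
  calc μ.real {ω | m + √(2 * v * x) + c * x ≤ X ω}
      ≤ exp (-t * (m + √(2 * v * x) + c * x)) * mgf X μ t := measure_ge_le_exp_mul_mgf _ ht0 hint
    _ ≤ exp (-t * (m + √(2 * v * x) + c * x)) * exp (t * m + v * t ^ 2 / (2 * (1 - c * t))) := by
        gcongr
    _ = exp (-x) := by
        rw [← exp_add, hct, hvx, hv2, hx2, ht]
        congr 1
        field_simp
        ring

lemma measureReal_le_le_exp_neg_of_mgf_le [IsFiniteMeasure μ] {m v x : ℝ} (hv : 0 < v)
    (hx : 0 ≤ x)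
    (hX : ∀ t ≤ 0, Integrable (fun ω => exp (t * X ω)) μ ∧
      mgf X μ t ≤ exp (t * m + v * t ^ 2 / 2)) :
    μ.real {ω | X ω ≤ m - √(2 * v * x)} ≤ exp (-x) := by
  have hneg : ∀ t, 0 ≤ t → 0 * t < 1 → Integrable (fun ω => exp (t * (-X) ω)) μ ∧
      mgf (-X) μ t ≤ exp (t * -m + v * t ^ 2 / (2 * (1 - 0 * t))) := by
    intro t ht _
    obtain ⟨hint, hmgf⟩ := hX (-t) (by linarith)
    refine ⟨by simpa using hint, ?_⟩
    rw [mgf_neg]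
    convert hmgf using 2
    ring
  convert measureReal_ge_le_exp_neg_of_mgf_le hv le_rfl hx hneg using 2
  ext ω
  simp only [Set.mem_ofPred_eq, Pi.neg_apply]
  constructor <;> intro h <;> linarith

lemma one_sub_le_measureReal_le_of_measureReal_ge_le [IsProbabilityMeasure μ]
    (hX : AEMeasurable X μ) {b ε : ℝ} (h : μ.real {ω | b ≤ X ω} ≤ ε) :
    1 - ε ≤ μ.real {ω | X ω ≤ b} := by
  have hcompl := measureReal_compl₀ (nullMeasurableSet_le hX (aemeasurable_const (b := b)))
  have hmono : μ.real {ω | X ω ≤ b}ᶜ ≤ μ.real {ω | b ≤ X ω} :=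
    measureReal_mono (fun ω (hω : ¬X ω ≤ b) => (not_le.1 hω).le) (measure_ne_top μ _)
  rw [probReal_univ] at hcompl
  linarith

lemma one_sub_le_measureReal_ge_of_measureReal_le_le [IsProbabilityMeasure μ]
    (hX : AEMeasurable X μ) {b ε : ℝ} (h : μ.real {ω | X ω ≤ b} ≤ ε) :
    1 - ε ≤ μ.real {ω | b ≤ X ω} := by
  have hcompl := measureReal_compl₀ (nullMeasurableSet_le (aemeasurable_const (b := b)) hX)
  have hmono : μ.real {ω | b ≤ X ω}ᶜ ≤ μ.real {ω | X ω ≤ b} :=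
    measureReal_mono (fun ω (hω : ¬b ≤ X ω) => (not_le.1 hω).le) (measure_ne_top μ _)
  rw [probReal_univ] at hcompl
  linarith

end Tails

theorem noncentral_chi_squared_concentration_general {Ω : Type*} [MeasureSpace Ω]
    (k : ℕ) (hk : 0 < k) (Z : Fin k → Ω → ℝ)
    (hindep : iIndepFun Z volume)
    (hgauss : ∀ i, Measure.map (Z i) volume = gaussianReal 0 1)
    (μpar : Fin k → ℝ) (lam : ℝ) (hlam : lam = ∑ i, (μpar i) ^ 2)
    (x : ℝ) (hx : 0 < x) :
    (volume {ω | (∑ i, (Z i ω + μpar i) ^ 2) ≤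
        (k : ℝ) + lam + 2 * Real.sqrt (((k : ℝ) + 2 * lam) * x) + 2 * x}).toReal ≥
      1 - Real.exp (-x) ∧
    (volume {ω | (∑ i, (Z i ω + μpar i) ^ 2) ≥
        (k : ℝ) + lam - 2 * Real.sqrt (((k : ℝ) + 2 * lam) * x)}).toReal ≥
      1 - Real.exp (-x) := by
  have := hindep.isProbabilityMeasure
  set X : Ω → ℝ := fun ω => ∑ i, (Z i ω + μpar i) ^ 2
  have hXm : AEMeasurable X volume := by
    have (i : Fin k) : AEMeasurable (Z i) volume :=
      aemeasurable_of_map_neZero (by rw [hgauss i]; infer_instance)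
    fun_prop
  have hmgf (t : ℝ) (ht : t < 1 / 2) : mgf X volume t = noncentralChiSquaredMGF k lam t := by
    simpa [hlam] using mgf_sum_sq_add_eq_noncentralChiSquaredMGF hindep hgauss μpar ht
  have hint (t : ℝ) (ht : t < 1 / 2) : Integrable (fun ω => exp (t * X ω)) volume :=
    .of_integral_ne_zero <| by
      rw [← mgf, hmgf t ht, noncentralChiSquaredMGF_eq_exp k lam ht]; exact (exp_pos _).ne'
  have hlam0 : 0 ≤ lam := hlam ▸ by positivity
  have hv : 0 < 2 * ((k : ℝ) + 2 * lam) := by positivity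
  have hsqrt : √(2 * (2 * ((k : ℝ) + 2 * lam)) * x) = 2 * √((k + 2 * lam) * x) := by
    rw [show 2 * (2 * ((k : ℝ) + 2 * lam)) * x = 2 ^ 2 * ((k + 2 * lam) * x) by ring,
      sqrt_mul' _ (by positivity), sqrt_sq zero_le_two]
  have hupper := measureReal_ge_le_exp_neg_of_mgf_le (m := k + lam) hv zero_le_two hx.le
    fun t ht0 ht => ⟨hint t (by linarith),
      (hmgf t (by linarith)).trans_le (noncentralChiSquaredMGF_le_of_nonneg k ht0 (by linarith))⟩
  have hlower := measureReal_le_le_exp_neg_of_mgf_le (m := k + lam) hv hx.le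
    fun t ht => ⟨hint t (by linarith),
      (hmgf t (by linarith)).trans_le (noncentralChiSquaredMGF_le_of_nonpos k hlam0 ht)⟩
  rw [hsqrt] at hupper hlower
  exact ⟨one_sub_le_measureReal_le_of_measureReal_ge_le hXm hupper,
    one_sub_le_measureReal_ge_of_measureReal_le_le hXm hlower⟩

theorem noncentral_chi_squared_concentration {Ω : Type*} [MeasureSpace Ω]
    (hP : IsProbabilityMeasure (volume : Measure Ω))
    (k : ℕ) (hk : 0 < k) (Z : Fin k → Ω → ℝ)
    (hindep : iIndepFun Z volume)
    (hgauss : ∀ i, Measure.map (Z i) volume = gaussianReal 0 1)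
    (μpar : Fin k → ℝ) (lam : ℝ) (hlam : lam = ∑ i, (μpar i) ^ 2)
    (x : ℝ) (hx : 0 < x) :
    (volume {ω | (∑ i, (Z i ω + μpar i) ^ 2) ≤
        (k : ℝ) + lam + 2 * Real.sqrt (((k : ℝ) + 2 * lam) * x) + 2 * x}).toReal ≥
      1 - Real.exp (-x) ∧
    (volume {ω | (∑ i, (Z i ω + μpar i) ^ 2) ≥
        (k : ℝ) + lam - 2 * Real.sqrt (((k : ℝ) + 2 * lam) * x)}).toReal ≥
      1 - Real.exp (-x) :=
  noncentral_chi_squared_concentration_general k hk Z hindep hgauss μpar lam hlam x hx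
end
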